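/- arXiv:1102.0686 — 3 statements merged into one kernel-verified Lean document; each statement's English description precedes it below -/
import Mathlib

section
/- For every computable order h : ℕ → ℕ, Solovay's function α satisfies α(n) ≤ h(n) + O(1); in particular α grows more slowly (up to a constant) than every computable order. -/
open Set Filter

namespace KC

/-- Length of the binary string identified with the natural number `n`. -/
def len (n : ℕ) : ℕ := Nat.log 2 (n + 1)

/-- Complexity of `x` relative to machine `T`. -/
noncomputable def MachineCplx (T : ℕ →. ℕ) (x : ℕ) : ℕ := sInf {n | ∃ y, len y = n ∧ x ∈ T y}

/-- `U` is an optimal machine. -/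
def Optimal (U : ℕ →. ℕ) : Prop :=
  Partrec U ∧ ∀ T : ℕ →. ℕ, Partrec T → ∃ c, ∀ x y, x ∈ T y → MachineCplx U x ≤ len y + c

/-- Conditional complexity of `x` given `y` relative to machine `T`. -/
noncomputable def CondCplx (T : ℕ →. ℕ) (x y : ℕ) : ℕ :=
  sInf {n | ∃ z, len z = n ∧ x ∈ T (Nat.pair z y)}

/-- `U` is optimal as a conditional machine. -/
def CondOptimal (U : ℕ →. ℕ) : Prop :=
  Partrec U ∧ ∀ T : ℕ →. ℕ, Partrec T →
    ∃ c, ∀ x y z, x ∈ T (Nat.pair z y) → CondCplx U x y ≤ len z + c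

/-- `y` is a prefix of `z` (as binary strings identified with naturals). -/
def IsPrefix (y z : ℕ) : Prop := ∃ k, (y + 1) * 2 ^ k ≤ z + 1 ∧ z + 1 < (y + 2) * 2 ^ k

/-- A machine with prefix-free domain. -/
def PrefixFree (T : ℕ →. ℕ) : Prop :=
  ∀ y z, (T y).Dom → (T z).Dom → IsPrefix y z → y = z

/-- `U` is an optimal prefix-free machine. -/
def PrefixOptimal (U : ℕ →. ℕ) : Prop :=
  Partrec U ∧ PrefixFree U ∧ ∀ T : ℕ →. ℕ, Partrec T → PrefixFree T →
    ∃ c, ∀ x y, x ∈ T y → MachineCplx U x ≤ len y + c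

/-- Upper semicomputability: `A` is a pointwise limit of a computable
nonincreasing sequence of approximations. -/
def UpperSemicomputable (A : ℕ → ℕ) : Prop :=
  ∃ F : ℕ → ℕ → ℕ, Computable₂ F ∧ (∀ x, Antitone (F x)) ∧ ∀ x, A x = ⨅ s, F x s

/-- Uniform upper semicomputability for a two-argument function. -/
def UpperSemicomputable₂ (B : ℕ → ℕ → ℕ) : Prop :=
  UpperSemicomputable (fun p => B (Nat.unpair p).1 (Nat.unpair p).2)

/-- Solovay's function `α` built from a complexity function `K`. -/
noncomputable def solovay (K : ℕ → ℕ) (n : ℕ) : ℕ := sInf {m | ∃ i, n < i ∧ K i = m}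

/-- An order: total, non-decreasing, unbounded. -/
def IsOrder (h : ℕ → ℕ) : Prop := Monotone h ∧ ∀ m, ∃ n, m ≤ h n

/-- Sub-linearity: `f n = o(n)`. -/
def Sublinear (f : ℕ → ℕ) : Prop :=
  Tendsto (fun n => (f n : ℝ) / n) atTop (nhds 0)

/-- `p_f = max {n | f n ≥ n}`. -/
noncomputable def pstar (f : ℕ → ℕ) : ℕ := sSup {n | n ≤ f n}

/-- The star-operator: `f* n = min {k | f^[k] n ≤ p_f}`. -/
noncomputable def starOp (f : ℕ → ℕ) (n : ℕ) : ℕ := sInf {k | f^[k] n ≤ pstar f}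

end KC

open KC

/-! The partial computable map sending `m` to the least `i` with `m < h i` becomes a prefix-free
machine when `m` is read in the unary code `0^m 1`, of length `m + 1`; hence its value `i` has
`K(i) ≤ m + O(1)`. For `m = h n`, monotonicity of `h` forces `n < i`, so
`α(n) ≤ K(i) ≤ h(n) + O(1)`. -/

namespace KC

theorem isPrefix_iff_div {y z : ℕ} : IsPrefix y z ↔ ∃ k, (z + 1) / 2 ^ k = y + 1 := by
  refine exists_congr fun k => ?_
  rw [Nat.div_eq_iff (by positivity), add_mul, add_mul, one_mul]
  omega

/-- `2 ^ (m + 1)` encodes the string `0^m 1`. -/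
def unaryCode (m : ℕ) : ℕ := 2 ^ (m + 1)

theorem len_unaryCode (m : ℕ) : len (unaryCode m) = m + 1 :=
  Nat.log_eq_of_pow_le_of_lt_pow (Nat.le_succ _)
    (by rw [unaryCode, pow_succ _ (m + 1)]; have := Nat.one_lt_two_pow (Nat.succ_ne_zero m); omega)

theorem eq_of_isPrefix_unaryCode {a b : ℕ} (h : IsPrefix (unaryCode a) (unaryCode b)) :
    a = b := by
  obtain ⟨k, hk⟩ := isPrefix_iff_div.1 h
  simp only [unaryCode] at hk
  cases k with
  | zero => simpa using (Nat.pow_right_injective le_rfl (by simpa using hk)).symm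
  | succ j =>
    rw [pow_succ' 2 j, ← Nat.div_div_eq_div_mul, pow_succ' 2 b, Nat.mul_add_div two_pos,
      Nat.div_eq_of_lt one_lt_two, add_zero] at hk
    -- dropping `j + 1 ≥ 1` trailing bits of `0^b 1` leaves `2 ^ (b - j)` or `0`
    exfalso
    rcases le_or_gt j b with hjb | hjb
    · rw [Nat.pow_div hjb two_pos] at hk
      rcases Nat.eq_zero_or_pos (b - j) with hbj | hbj
      · rw [hbj] at hk; simp at hk
      · have h1 : Even (2 ^ (b - j)) := (Nat.even_pow' hbj.ne').2 even_two
        have h2 : Odd (2 ^ (a + 1) + 1) :=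
          ((Nat.even_pow' (Nat.succ_ne_zero a)).2 even_two).add_one
        exact Nat.not_even_iff_odd.2 h2 (hk ▸ h1)
    · rw [Nat.div_eq_of_lt (Nat.pow_lt_pow_right one_lt_two hjb)] at hk
      omega

theorem primrec_unaryCode : Primrec unaryCode :=
  (Primrec₂.unpaired'.1 Nat.Primrec.pow).comp (Primrec.const 2) Primrec.succ

def unaryMachine (f : ℕ →. ℕ) : ℕ →. ℕ := fun y =>
  (Nat.rfind fun m => Part.some (decide (y = unaryCode m))).bind f

theorem partrec_unaryMachine {f : ℕ →. ℕ} (hf : Partrec f) : Partrec (unaryMachine f) :=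
  have hcode : Primrec fun p : ℕ × ℕ => decide (p.1 = unaryCode p.2) :=
    (Primrec.eq.comp Primrec.fst (primrec_unaryCode.comp Primrec.snd)).decide
  (Partrec.rfind hcode.to_comp.partrec.to₂).bind (hf.comp Computable.snd).to₂

theorem mem_unaryMachine {f : ℕ →. ℕ} {m x : ℕ} (hx : x ∈ f m) :
    x ∈ unaryMachine f (unaryCode m) := by
  refine Part.mem_bind_iff.2 ⟨m, Nat.mem_rfind.2 ⟨by simp, fun hlt => ?_⟩, hx⟩
  simpa [unaryCode] using (Nat.pow_lt_pow_right one_lt_two (Nat.succ_lt_succ hlt)).ne'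

theorem exists_eq_unaryCode_of_dom {f : ℕ →. ℕ} {y : ℕ} (hy : (unaryMachine f y).Dom) :
    ∃ m, y = unaryCode m := by
  obtain ⟨hm, -⟩ := Part.bind_dom.1 hy
  exact ⟨_, by simpa using Nat.rfind_spec (Part.get_mem hm)⟩

theorem prefixFree_unaryMachine (f : ℕ →. ℕ) : PrefixFree (unaryMachine f) := by
  intro y z hy hz hyz
  obtain ⟨a, rfl⟩ := exists_eq_unaryCode_of_dom hy
  obtain ⟨b, rfl⟩ := exists_eq_unaryCode_of_dom hz
  rw [eq_of_isPrefix_unaryCode hyz]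

theorem PrefixOptimal.exists_machineCplx_le {U f : ℕ →. ℕ} (hU : PrefixOptimal U)
    (hf : Partrec f) : ∃ c, ∀ m x, x ∈ f m → MachineCplx U x ≤ m + c := by
  obtain ⟨c, hc⟩ := hU.2.2 _ (partrec_unaryMachine hf) (prefixFree_unaryMachine f)
  refine ⟨c + 1, fun m x hx => ?_⟩
  have := hc x _ (mem_unaryMachine hx)
  rw [len_unaryCode] at this
  omega

theorem solovay_le {K : ℕ → ℕ} {n i : ℕ} (hni : n < i) : solovay K n ≤ K i :=
  Nat.sInf_le ⟨i, hni, rfl⟩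

end KC

theorem Computable.partrec_rfind_lt {h : ℕ → ℕ} (hh : Computable h) :
    Partrec fun m => Nat.rfind fun i => Part.some (decide (m < h i)) :=
  Partrec.rfind
    (Primrec.nat_lt.decide.to_comp.comp Computable.fst (hh.comp Computable.snd)).partrec.to₂

theorem exists_mem_rfind_lt {h : ℕ → ℕ} (hh : ∀ m, ∃ n, m ≤ h n) (m : ℕ) :
    ∃ i ∈ Nat.rfind (fun i => Part.some (decide (m < h i))), m < h i := by
  obtain ⟨n, hn⟩ := hh (m + 1)
  obtain ⟨i, hi, -⟩ := Nat.rfind_min' (p := fun i => decide (m < h i)) (by simpa using hn)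
  exact ⟨i, hi, by simpa using Nat.rfind_spec hi⟩

/-- `α` grows more slowly (up to a constant) than every computable order. -/
theorem solovay_le_order (U' : ℕ →. ℕ) (hU' : PrefixOptimal U') :
    ∀ h : ℕ → ℕ, Computable h → IsOrder h →
      ∃ c, ∀ n, solovay (MachineCplx U') n ≤ h n + c := by
  rintro h hh ⟨hmono, hunb⟩
  obtain ⟨c, hc⟩ := hU'.exists_machineCplx_le hh.partrec_rfind_lt
  refine ⟨c, fun n => ?_⟩
  obtain ⟨i, hi, hni⟩ := exists_mem_rfind_lt hunb (h n)
  exact (solovay_le (hmono.reflect_lt hni)).trans (hc _ _ hi)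
end

section
/- If f is a computable sub-linear order, then f* is computable; if f is an upper semicomputable sub-linear order, then f* is upper semicomputable. -/
open Set Filter

/-!
Sublinearity gives `f x < x` for every `x > p_f`, so the orbit of `n` under `f` drops to `p_f` or
below within `n` steps and `f* n ≤ n`. Hence `f* n` is the step counter of the iteration of `f`
started at `n`, halted once the value is `≤ p_f`, and run for `n` steps: a computable function of
`n` when `f` is computable. If `f = inf_t F(·, t)` with `F` computable, the same counter run with
`F(·, t)` in place of `f` never undercounts, because `f` is monotone and `F(·, t) ≥ f`, and it is
exact as soon as `F(·, t)` agrees with `f` on `[0, n]`.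
-/

section Computability

variable {α β : Type*} [Primcodable α] [Primcodable β]

theorem Computable.nat_iterate {f : α → ℕ} {g : α → β} {h : α → β → β} (hf : Computable f)
    (hg : Computable g) (hh : Computable₂ h) : Computable fun a => (h a)^[f a] (g a) :=
  (Computable.nat_rec hf hg (hh.comp Computable.fst (Computable.snd.comp Computable.snd)).to₂).of_eq
    fun a => by induction f a <;> simp [*, -Function.iterate_succ, Function.iterate_succ']

end Computability

namespace KC

def haltStep (g : ℕ → ℕ) (p : ℕ) (s : ℕ × ℕ) : ℕ × ℕ :=
  if s.1 ≤ p then s else (g s.1, s.2 + 1)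

def haltCount (g : ℕ → ℕ) (p n : ℕ) : ℕ :=
  ((haltStep g p)^[n] (n, 0)).2

section HaltStep

variable {g g' : ℕ → ℕ} {p : ℕ}

theorem haltStep_of_le {s : ℕ × ℕ} (hs : s.1 ≤ p) : haltStep g p s = s := if_pos hs

theorem haltStep_of_lt {s : ℕ × ℕ} (hs : p < s.1) : haltStep g p s = (g s.1, s.2 + 1) :=
  if_neg hs.not_ge

theorem le_haltStep_snd (s : ℕ × ℕ) : s.2 ≤ (haltStep g p s).2 := by
  unfold haltStep; split_ifs <;> simp

theorem haltStep_iterate_eq_iterate_min {n : ℕ} (hn : ∃ k, g^[k] n ≤ p) (k : ℕ) :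
    (haltStep g p)^[k] (n, 0) =
      (g^[min k (sInf {j | g^[j] n ≤ p})] n, min k (sInf {j | g^[j] n ≤ p})) := by
  set T := sInf {j | g^[j] n ≤ p}
  induction k with
  | zero => simp
  | succ k ih =>
    rw [Function.iterate_succ_apply', ih]
    rcases lt_or_ge k T with hk | hk
    · have hlt : p < g^[k] n := not_le.1 (Nat.notMem_of_lt_sInf (s := {j | g^[j] n ≤ p}) hk)
      rw [min_eq_left hk.le, min_eq_left hk, haltStep_of_lt hlt, Function.iterate_succ_apply']
    · rw [min_eq_right hk, min_eq_right (hk.trans k.le_succ)]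
      exact haltStep_of_le (Nat.sInf_mem hn)

-- Once the `g`-orbit has halted, its position no longer matters: hence the comparison up to `max p`.
theorem haltStep_iterate_le (hg : Monotone g) (hgg' : ∀ x, g x ≤ g' x) (s : ℕ × ℕ) (k : ℕ) :
    max p ((haltStep g p)^[k] s).1 ≤ max p ((haltStep g' p)^[k] s).1 ∧
      ((haltStep g p)^[k] s).2 ≤ ((haltStep g' p)^[k] s).2 := by
  induction k with
  | zero => simp
  | succ k ih =>
    simp only [Function.iterate_succ_apply']
    set a := (haltStep g p)^[k] s
    set b := (haltStep g' p)^[k] s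
    rcases le_or_gt a.1 p with ha | ha
    · rw [haltStep_of_le ha]
      exact ⟨by simp [ha], ih.2.trans (le_haltStep_snd b)⟩
    · have hab : a.1 ≤ b.1 := by have := ih.1; omega
      rw [haltStep_of_lt ha, haltStep_of_lt (ha.trans_le hab)]
      exact ⟨max_le_max le_rfl ((hg hab).trans (hgg' b.1)), Nat.succ_le_succ ih.2⟩

theorem haltCount_mono (hg : Monotone g) (hgg' : ∀ x, g x ≤ g' x) (n : ℕ) :
    haltCount g p n ≤ haltCount g' p n :=
  (haltStep_iterate_le hg hgg' (n, 0) n).2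

variable (hdesc : ∀ x, p < x → g x < x)
include hdesc

theorem haltStep_iterate_fst_le (s : ℕ × ℕ) (k : ℕ) : ((haltStep g p)^[k] s).1 ≤ s.1 := by
  induction k with
  | zero => rfl
  | succ k ih =>
    rw [Function.iterate_succ_apply']
    rcases le_or_gt ((haltStep g p)^[k] s).1 p with h | h
    · rwa [haltStep_of_le h]
    · rw [haltStep_of_lt h]
      exact (hdesc _ h).le.trans ih

theorem haltStep_iterate_congr {s : ℕ × ℕ} (hagree : ∀ x ≤ s.1, g' x = g x) (k : ℕ) :
    (haltStep g' p)^[k] s = (haltStep g p)^[k] s := by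
  induction k with
  | zero => rfl
  | succ k ih =>
    simp only [Function.iterate_succ_apply', ih]
    rcases le_or_gt ((haltStep g p)^[k] s).1 p with h | h
    · rw [haltStep_of_le h, haltStep_of_le h]
    · rw [haltStep_of_lt h, haltStep_of_lt h, hagree _ (haltStep_iterate_fst_le hdesc s k)]

theorem haltCount_congr {n : ℕ} (hagree : ∀ x ≤ n, g' x = g x) :
    haltCount g' p n = haltCount g p n := by
  rw [haltCount, haltCount, haltStep_iterate_congr hdesc hagree]

theorem exists_iterate_le_of_descent (n : ℕ) : ∃ k ≤ n, g^[k] n ≤ p := by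
  induction n using Nat.strong_induction_on with
  | _ n ih =>
    rcases le_or_gt n p with hn | hn
    · exact ⟨0, n.zero_le, hn⟩
    · obtain ⟨k, hk, hkp⟩ := ih (g n) (hdesc n hn)
      exact ⟨k + 1, by have := hdesc n hn; omega, hkp⟩

theorem haltCount_eq_sInf (n : ℕ) : haltCount g p n = sInf {k | g^[k] n ≤ p} := by
  obtain ⟨k, hkn, hk⟩ := exists_iterate_le_of_descent hdesc n
  rw [haltCount, haltStep_iterate_eq_iterate_min ⟨k, hk⟩,
    min_eq_right ((Nat.sInf_le (s := {j | g^[j] n ≤ p}) hk).trans hkn)]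

end HaltStep

section Computability

open Computable

variable {α : Type*} [Primcodable α]

theorem haltStep_computable {g : α → ℕ → ℕ} (hg : Computable₂ g) (p : ℕ) :
    Computable₂ fun a s => haltStep (g a) p s := by
  have hle : Computable fun x : α × (ℕ × ℕ) => decide (x.2.1 ≤ p) :=
    Primrec.nat_le.decide.to_comp.comp (fst.comp snd) (const p)
  refine (cond hle snd ((hg.comp fst (fst.comp snd)).pair (succ.comp (snd.comp snd)))).of_eq
    fun x => ?_
  by_cases h : x.2.1 ≤ p <;> simp [haltStep, h]

theorem haltCount_computable {g : α → ℕ → ℕ} (hg : Computable₂ g) (p : ℕ) :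
    Computable₂ fun a n => haltCount (g a) p n :=
  snd.comp (nat_iterate snd (snd.pair (const 0))
    ((haltStep_computable hg p).comp (fst.comp fst) snd))

theorem UpperSemicomputable.of_eq_iInf {A : ℕ → ℕ} {G : ℕ → ℕ → ℕ} (hG : Computable₂ G)
    (hA : ∀ x, A x = ⨅ s, G x s) : UpperSemicomputable A := by
  let M : ℕ → ℕ → ℕ := fun x s => Nat.rec (G x 0) (fun t m => min m (G x (t + 1))) s
  have hM : Computable₂ M :=
    nat_rec (f := fun a : ℕ × ℕ => a.2) (g := fun a => G a.1 0)
      (h := fun a (w : ℕ × ℕ) => min w.2 (G a.1 (w.1 + 1))) snd (hG.comp fst (const 0))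
      (Primrec.nat_min.to_comp.comp (snd.comp snd)
        (hG.comp (fst.comp fst) (succ.comp (fst.comp snd))))
  have hM_le : ∀ x s, M x s ≤ G x s := fun x s => by cases s <;> simp [M]
  have hiInf_le : ∀ x s, ⨅ t, G x t ≤ M x s := fun x s => by
    induction s with
    | zero => exact ciInf_le' _ 0
    | succ s ih => exact le_min ih (ciInf_le' _ _)
  refine ⟨M, hM, fun x => antitone_nat_of_succ_le fun _ => min_le_left _ _, fun x => ?_⟩
  rw [hA]
  exact le_antisymm (le_ciInf (hiInf_le x)) (le_ciInf fun s => (ciInf_le' _ s).trans (hM_le x s))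

end Computability

variable {f : ℕ → ℕ}

theorem Sublinear.eventually_lt (hs : Sublinear f) : ∀ᶠ n in atTop, f n < n := by
  filter_upwards [hs.eventually_lt_const one_pos, eventually_gt_atTop 0] with n hn hn0
  exact_mod_cast (div_lt_one (Nat.cast_pos.2 hn0)).1 hn

theorem Sublinear.lt_self_of_pstar_lt (hs : Sublinear f) {x : ℕ} (hx : pstar f < x) : f x < x := by
  obtain ⟨N, hN⟩ := eventually_atTop.1 hs.eventually_lt
  have hbdd : BddAbove {n | n ≤ f n} := ⟨N, fun n hn => not_lt.1 fun h => (hN n h.le).not_ge hn⟩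
  exact not_le.1 fun h => hx.not_ge (le_csSup hbdd h)

theorem Sublinear.starOp_eq_haltCount (hs : Sublinear f) (n : ℕ) :
    starOp f n = haltCount f (pstar f) n :=
  (haltCount_eq_sInf (fun _ => hs.lt_self_of_pstar_lt) n).symm

theorem eventually_eq_iInf_of_antitone {F : ℕ → ℕ → ℕ} (hF : ∀ x, Antitone (F x)) (n : ℕ) :
    ∀ᶠ t in atTop, ∀ y ≤ n, F y t = ⨅ s, F y s := by
  refine (eventually_all_finite (Set.finite_le_nat n)).2 fun y _ => ?_
  obtain ⟨s₀, hs₀⟩ := ciInf_mem (F y)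
  filter_upwards [eventually_ge_atTop s₀] with t ht
  exact le_antisymm (hs₀ ▸ hF y ht) (ciInf_le' _ t)

theorem Sublinear.starOp_eq_iInf_haltCount (hs : Sublinear f) (hf : Monotone f)
    {F : ℕ → ℕ → ℕ} (hF : ∀ x, Antitone (F x)) (hfF : ∀ x, f x = ⨅ s, F x s) (n : ℕ) :
    starOp f n = ⨅ t, haltCount (fun y => F y t) (pstar f) n := by
  rw [hs.starOp_eq_haltCount]
  refine le_antisymm (le_ciInf fun t => haltCount_mono hf (fun x => ?_) n) ?_
  · exact hfF x ▸ ciInf_le' _ t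
  · obtain ⟨t, ht⟩ := (eventually_eq_iInf_of_antitone hF n).exists
    refine (ciInf_le' _ t).trans_eq ?_
    exact haltCount_congr (fun _ => hs.lt_self_of_pstar_lt) fun y hy => (ht y hy).trans (hfF y).symm

end KC

open KC
/-- The star-operator preserves computability and upper semicomputability. -/
theorem starOp_computability (f : ℕ → ℕ) (hf : IsOrder f) (hs : Sublinear f) :
    (Computable f → Computable (starOp f)) ∧
    (UpperSemicomputable f → UpperSemicomputable (starOp f)) := by
  refine ⟨fun hcf => ?_, fun ⟨F, hF, hF_anti, hfF⟩ => ?_⟩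
  · have := haltCount_computable (g := fun _ : ℕ => f) (hcf.comp Computable.snd) (pstar f)
    exact (this.comp Computable.id Computable.id).of_eq fun n => (hs.starOp_eq_haltCount n).symm
  · have := haltCount_computable (g := fun t y => F y t) (hF.comp Computable.snd Computable.fst)
      (pstar f)
    exact UpperSemicomputable.of_eq_iInf (this.comp Computable.snd Computable.fst).to₂
      (hs.starOp_eq_iInf_haltCount hf.1 hF_anti hfF)
end

section
/- If A : 2^{<ω} → ℕ is upper semicomputable and Σ_{x ∈ 2^{<ω}} 2^{−A(x)} < ∞, then K(x) ≤ A(x) + O(1). -/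
open Set Filter

open KC

/-!
Kraft–Chaitin: requests `(xₜ, nₜ)` enumerated by a computable sequence with `∑ 2^-nₜ ≤ 1` can be
served online by a prefix-free machine. Request `t` receives the binary string of length `nₜ + 1`
whose dyadic interval is the first one of that length to the right of `Sₜ = ∑_{u<t} 2^-nᵤ`; it lies
inside `[Sₜ, Sₜ₊₁)`, and these intervals are pairwise disjoint, so no codeword extends another.

If `F x s` decreases to `A x`, request `(x, F x s + c)` whenever `F x` takes a new value. For fixed
`x` these lengths are distinct and at least `A x + c`, so the total weight is at most
`2^(1-c) ∑ 2^-A(x) ≤ 1` for large `c`. The optimal machine simulates the resulting machine, whence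
`K(x) ≤ A x + c + 1 + O(1)`.
-/

theorem Nat.mem_rfindOpt_of_forall_mem_eq {α : Type*} {f : ℕ → Option α} {a : α} {n : ℕ}
    (hn : a ∈ f n) (h : ∀ m b, b ∈ f m → b = a) : a ∈ Nat.rfindOpt f := by
  have hdom : (Nat.rfindOpt f).Dom := Nat.rfindOpt_dom.2 ⟨n, a, hn⟩
  obtain ⟨m, hm⟩ := Nat.rfindOpt_spec (Part.get_mem hdom)
  exact h m _ hm ▸ Part.get_mem hdom

theorem primrec₂_pow : Primrec₂ ((· ^ ·) : ℕ → ℕ → ℕ) := Primrec₂.unpaired'.1 Nat.Primrec.pow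

namespace KC

/-- Reading `y` as the binary string `w` with `y + 1 = 0b1w`, this is the set of reals whose
binary expansion starts with `1.w`. -/
noncomputable def binaryInterval (y : ℕ) : Set ℝ :=
  Ico ((y + 1 : ℝ) / 2 ^ len y) ((y + 2) / 2 ^ len y)

lemma left_mem_binaryInterval (y : ℕ) : (y + 1 : ℝ) / 2 ^ len y ∈ binaryInterval y :=
  left_mem_Ico.2 (by gcongr; linarith)

lemma isPrefix_refl (y : ℕ) : IsPrefix y y := ⟨0, by simp⟩

lemma two_pow_len_le (y : ℕ) : 2 ^ len y ≤ y + 1 := Nat.pow_log_le_self 2 y.succ_ne_zero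

lemma lt_two_pow_len_succ (y : ℕ) : y + 1 < 2 ^ (len y + 1) := Nat.lt_pow_succ_log_self one_lt_two _

theorem IsPrefix.binaryInterval_subset {y z : ℕ} (h : IsPrefix y z) :
    binaryInterval z ⊆ binaryInterval y := by
  obtain ⟨k, hlo, hhi⟩ := h
  have hlen : len z = len y + k := by
    refine Nat.log_eq_of_pow_le_of_lt_pow ?_ ?_
    · calc 2 ^ (len y + k) = 2 ^ len y * 2 ^ k := pow_add _ _ _
        _ ≤ (y + 1) * 2 ^ k := Nat.mul_le_mul_right _ (two_pow_len_le y)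
        _ ≤ z + 1 := hlo
    · calc z + 1 < (y + 2) * 2 ^ k := hhi
        _ ≤ 2 ^ (len y + 1) * 2 ^ k := Nat.mul_le_mul_right _ (lt_two_pow_len_succ y)
        _ = 2 ^ (len y + k + 1) := by ring
  have hlo' : ((y + 1) * 2 ^ k : ℝ) ≤ z + 1 := by exact_mod_cast hlo
  have hhi' : (z + 2 : ℝ) ≤ (y + 2) * 2 ^ k := by exact_mod_cast hhi
  unfold binaryInterval
  rw [hlen, pow_add]
  apply Ico_subset_Ico
  · rw [div_le_div_iff₀ (by positivity) (by positivity)]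
    nlinarith [pow_pos (two_pos (α := ℝ)) (len y)]
  · rw [div_le_div_iff₀ (by positivity) (by positivity)]
    nlinarith [pow_pos (two_pos (α := ℝ)) (len y)]

lemma floor_mul_two_pow_add_two_le {S : ℝ} (hS : 0 ≤ S) (n : ℕ) :
    (⌊S * 2 ^ (n + 1)⌋₊ : ℝ) + 2 ≤ (S + 2⁻¹ ^ n) * 2 ^ (n + 1) := by
  have := Nat.floor_le (a := S * 2 ^ (n + 1)) (by positivity)
  have h2 : (2 : ℝ)⁻¹ ^ n * 2 ^ (n + 1) = 2 := by
    rw [pow_succ, ← mul_assoc, ← mul_pow, inv_mul_cancel₀ two_ne_zero, one_pow, one_mul]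
  linarith

lemma len_two_pow_add_floor {S : ℝ} {n : ℕ} (hS : 0 ≤ S) (h1 : S + 2⁻¹ ^ n ≤ 1) :
    len (2 ^ (n + 1) + ⌊S * 2 ^ (n + 1)⌋₊) = n + 1 := by
  have hreal := floor_mul_two_pow_add_two_le hS n
  have : (⌊S * 2 ^ (n + 1)⌋₊ : ℝ) + 2 ≤ 2 ^ (n + 1) := by
    nlinarith [pow_pos (two_pos (α := ℝ)) (n + 1)]
  have : ⌊S * 2 ^ (n + 1)⌋₊ + 2 ≤ 2 ^ (n + 1) := by exact_mod_cast this
  refine Nat.log_eq_of_pow_le_of_lt_pow (by omega) ?_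
  rw [pow_succ]
  omega

lemma binaryInterval_two_pow_add_floor_subset {S : ℝ} {n : ℕ} (hS : 0 ≤ S)
    (h1 : S + 2⁻¹ ^ n ≤ 1) :
    binaryInterval (2 ^ (n + 1) + ⌊S * 2 ^ (n + 1)⌋₊) ⊆ Ico (1 + S) (1 + (S + 2⁻¹ ^ n)) := by
  have hpos : (0 : ℝ) < 2 ^ (n + 1) := by positivity
  unfold binaryInterval
  rw [len_two_pow_add_floor hS h1]
  push_cast
  apply Ico_subset_Ico
  · rw [le_div_iff₀ hpos]
    nlinarith [Nat.lt_floor_add_one (S * 2 ^ (n + 1))]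
  · rw [div_le_iff₀ hpos]
    nlinarith [floor_mul_two_pow_add_two_le hS n]

section KraftChaitin

variable (r : ℕ → Option (ℕ × ℕ))

noncomputable def reqWeight (t : ℕ) : ℝ := (r t).elim 0 fun q => 2⁻¹ ^ q.2

noncomputable def partialWeight (T : ℕ) : ℝ := ∑ t ∈ Finset.range T, reqWeight r t

/-- `(E, N)` stands for the dyadic rational `N / 2 ^ E`; exact arithmetic in `ℕ` keeps the
construction computable. -/
def addWeight (o : Option (ℕ × ℕ)) (s : ℕ × ℕ) : ℕ × ℕ :=
  o.elim s fun q => (s.1 + q.2, s.2 * 2 ^ q.2 + 2 ^ s.1)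

def weightState : ℕ → ℕ × ℕ
  | 0 => (0, 0)
  | t + 1 => addWeight (r t) (weightState t)

def kcCode (t n : ℕ) : ℕ :=
  2 ^ (n + 1) + (weightState r t).2 * 2 ^ (n + 1) / 2 ^ (weightState r t).1

def kcMachine : ℕ →. ℕ := fun y =>
  Nat.rfindOpt fun t => (r t).bind fun q => if kcCode r t q.2 = y then some q.1 else none

variable {r}

lemma reqWeight_nonneg (t : ℕ) : 0 ≤ reqWeight r t := by
  unfold reqWeight
  cases r t <;> simp

lemma reqWeight_of_eq_some {t x n : ℕ} (ht : r t = some (x, n)) : reqWeight r t = 2⁻¹ ^ n := by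
  simp [reqWeight, ht]

lemma partialWeight_nonneg (T : ℕ) : 0 ≤ partialWeight r T :=
  Finset.sum_nonneg fun t _ => reqWeight_nonneg t

lemma partialWeight_succ (T : ℕ) : partialWeight r (T + 1) = partialWeight r T + reqWeight r T :=
  Finset.sum_range_succ _ _

lemma monotone_partialWeight : Monotone (partialWeight r) :=
  monotone_nat_of_le_succ fun T => by
    rw [partialWeight_succ]
    linarith [reqWeight_nonneg (r := r) T]

lemma weightState_div (t : ℕ) :
    ((weightState r t).2 : ℝ) / 2 ^ (weightState r t).1 = partialWeight r t := by
  induction t with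
  | zero => simp [weightState, partialWeight]
  | succ t ih =>
    rw [partialWeight_succ, ← ih, weightState]
    unfold addWeight reqWeight
    cases r t with
    | none => simp
    | some q =>
      simp only [Option.elim]
      push_cast
      rw [pow_add, inv_pow]
      field_simp

lemma kcCode_eq (t n : ℕ) :
    kcCode r t n = 2 ^ (n + 1) + ⌊partialWeight r t * 2 ^ (n + 1)⌋₊ := by
  rw [kcCode, ← weightState_div, ← Nat.floor_div_eq_div (K := ℝ)]
  congr 2
  push_cast
  ring

lemma binaryInterval_kcCode_subset (hw : ∀ T, partialWeight r T ≤ 1) {t x n : ℕ}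
    (ht : r t = some (x, n)) :
    binaryInterval (kcCode r t n) ⊆ Ico (1 + partialWeight r t) (1 + partialWeight r (t + 1)) := by
  have hsucc : partialWeight r (t + 1) = partialWeight r t + 2⁻¹ ^ n := by
    rw [partialWeight_succ, reqWeight_of_eq_some ht]
  rw [kcCode_eq, hsucc]
  exact binaryInterval_two_pow_add_floor_subset (partialWeight_nonneg t) (hsucc ▸ hw (t + 1))

lemma len_kcCode (hw : ∀ T, partialWeight r T ≤ 1) {t x n : ℕ} (ht : r t = some (x, n)) :
    len (kcCode r t n) = n + 1 := by
  rw [kcCode_eq]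
  refine len_two_pow_add_floor (partialWeight_nonneg t) ?_
  rw [← reqWeight_of_eq_some ht, ← partialWeight_succ]
  exact hw (t + 1)

theorem eq_of_isPrefix_kcCode (hw : ∀ T, partialWeight r T ≤ 1) {t u x x' n n' : ℕ}
    (ht : r t = some (x, n)) (hu : r u = some (x', n'))
    (h : IsPrefix (kcCode r t n) (kcCode r u n')) : t = u := by
  by_contra hne
  have hdisj := ((monotone_partialWeight (r := r)).const_add 1).pairwise_disjoint_on_Ico_succ hne
  have hp := left_mem_binaryInterval (kcCode r u n')
  exact Set.disjoint_left.1 hdisj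
    (binaryInterval_kcCode_subset hw ht (h.binaryInterval_subset hp))
    (binaryInterval_kcCode_subset hw hu hp)

lemma mem_kcMachine (hw : ∀ T, partialWeight r T ≤ 1) {t x n : ℕ} (ht : r t = some (x, n)) :
    x ∈ kcMachine r (kcCode r t n) := by
  refine Nat.mem_rfindOpt_of_forall_mem_eq (n := t) (by simp [ht]) fun u x' hx' => ?_
  obtain ⟨⟨x'', n'⟩, hu, hx'⟩ := Option.bind_eq_some_iff.1 hx'
  split_ifs at hx' with hcode
  cases hx'
  obtain rfl := eq_of_isPrefix_kcCode hw ht hu (hcode ▸ isPrefix_refl _)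
  simp_all

lemma exists_kcCode_eq_of_dom {y : ℕ} (hy : (kcMachine r y).Dom) :
    ∃ t x n, r t = some (x, n) ∧ kcCode r t n = y := by
  obtain ⟨t, x, hx⟩ := Nat.rfindOpt_dom.1 hy
  obtain ⟨⟨x', n⟩, ht, hx⟩ := Option.bind_eq_some_iff.1 hx
  split_ifs at hx with hcode
  exact ⟨t, x', n, ht, hcode⟩

theorem prefixFree_kcMachine (hw : ∀ T, partialWeight r T ≤ 1) : PrefixFree (kcMachine r) := by
  intro y z hy hz h
  obtain ⟨t, x, n, ht, rfl⟩ := exists_kcCode_eq_of_dom hy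
  obtain ⟨u, x', n', hu, rfl⟩ := exists_kcCode_eq_of_dom hz
  obtain rfl := eq_of_isPrefix_kcCode hw ht hu h
  simp_all

lemma primrec₂_addWeight : Primrec₂ addWeight := by
  refine (Primrec.option_casesOn Primrec.fst Primrec.snd
    (Primrec.pair (Primrec.nat_add.comp (Primrec.fst.comp (Primrec.snd.comp Primrec.fst))
        (Primrec.snd.comp Primrec.snd))
      (Primrec.nat_add.comp
        (Primrec.nat_mul.comp (Primrec.snd.comp (Primrec.snd.comp Primrec.fst))
          (primrec₂_pow.comp (Primrec.const 2) (Primrec.snd.comp Primrec.snd)))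
        (primrec₂_pow.comp (Primrec.const 2)
          (Primrec.fst.comp (Primrec.snd.comp Primrec.fst))))).to₂).of_eq ?_
  rintro ⟨_ | q, s⟩ <;> rfl

lemma computable_weightState (hr : Computable r) : Computable (weightState r) := by
  refine (Computable.nat_rec Computable.id (Computable.const ((0, 0) : ℕ × ℕ))
    (primrec₂_addWeight.to_comp.comp (hr.comp (Computable.fst.comp Computable.snd))
      (Computable.snd.comp Computable.snd)).to₂).of_eq fun t => ?_
  induction t with
  | zero => rfl
  | succ t ih => simp only [weightState, ← ih]; rfl

lemma computable₂_kcCode (hr : Computable r) : Computable₂ (kcCode r) := by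
  have hE : Computable fun p : ℕ × ℕ => (weightState r p.1).1 :=
    Computable.fst.comp ((computable_weightState hr).comp Computable.fst)
  have hN : Computable fun p : ℕ × ℕ => (weightState r p.1).2 :=
    Computable.snd.comp ((computable_weightState hr).comp Computable.fst)
  have hL : Computable fun p : ℕ × ℕ => 2 ^ (p.2 + 1) :=
    (primrec₂_pow.comp (Primrec.const 2) (Primrec.succ.comp Primrec.snd)).to_comp
  exact (Primrec.nat_add.to_comp.comp hL (Primrec.nat_div.to_comp.comp
    (Primrec.nat_mul.to_comp.comp hN hL) (primrec₂_pow.to_comp.comp (Computable.const 2) hE))).to₂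

theorem partrec_kcMachine (hr : Computable r) : Partrec (kcMachine r) := by
  have hcode : Computable fun p : (ℕ × ℕ) × (ℕ × ℕ) => decide (kcCode r p.1.2 p.2.2 = p.1.1) :=
    Primrec.eq.decide.to_comp.comp ((computable₂_kcCode hr).comp
      (Computable.snd.comp Computable.fst) (Computable.snd.comp Computable.snd))
      (Computable.fst.comp Computable.fst)
  have hstep : Computable₂ fun (p : ℕ × ℕ) (q : ℕ × ℕ) =>
      if kcCode r p.2 q.2 = p.1 then some q.1 else none :=
    (Computable.cond hcode (Computable.option_some.comp (Computable.fst.comp Computable.snd))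
      (Computable.const none)).of_eq fun p => by simp [Bool.cond_decide]
  exact Partrec.rfindOpt (Computable.option_bind (hr.comp Computable.snd) hstep).to₂

theorem exists_prefixFree_machine_of_requests (hr : Computable r)
    (hw : ∀ T, partialWeight r T ≤ 1) :
    ∃ M : ℕ →. ℕ, Partrec M ∧ PrefixFree M ∧
      ∀ t x n, r t = some (x, n) → ∃ y, len y = n + 1 ∧ x ∈ M y :=
  ⟨kcMachine r, partrec_kcMachine hr, prefixFree_kcMachine hw,
    fun _ _ _ ht => ⟨_, len_kcCode hw ht, mem_kcMachine hw ht⟩⟩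

end KraftChaitin

section NewValues

variable {F : ℕ → ℕ → ℕ} {c : ℕ}

def newValueReq (F : ℕ → ℕ → ℕ) (c x s : ℕ) : Option (ℕ × ℕ) :=
  if s = 0 ∨ F x s < F x (s - 1) then some (x, F x s + c) else none

lemma newValueReq_eq_some {x s : ℕ} {q : ℕ × ℕ} (h : newValueReq F c x s = some q) :
    q = (x, F x s + c) ∧ (s = 0 ∨ F x s < F x (s - 1)) := by
  unfold newValueReq at h
  split_ifs at h with hs
  exact ⟨(Option.some_inj.1 h).symm, hs⟩

lemma exists_newValueReq_eq (F : ℕ → ℕ → ℕ) (c x : ℕ) :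
    ∃ s, newValueReq F c x s = some (x, (⨅ s, F x s) + c) := by
  have hex : ∃ s, F x s = ⨅ s, F x s := ciInf_mem (F x)
  refine ⟨Nat.find hex, ?_⟩
  rw [newValueReq, if_pos, Nat.find_spec hex]
  by_cases h0 : Nat.find hex = 0
  · exact Or.inl h0
  · have hne : F x (Nat.find hex - 1) ≠ ⨅ s, F x s := Nat.find_min hex (by omega)
    have hle : ⨅ s, F x s ≤ F x (Nat.find hex - 1) := ciInf_le (OrderBot.bddBelow _) _
    exact Or.inr (by rw [Nat.find_spec hex]; omega)

lemma eq_of_newValueReq_eq (hF : ∀ x, Antitone (F x)) {t u : ℕ} {q : ℕ × ℕ}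
    (ht : Nat.unpaired (newValueReq F c) t = some q)
    (hu : Nat.unpaired (newValueReq F c) u = some q) : t = u := by
  obtain ⟨rfl, hs⟩ := newValueReq_eq_some ht
  obtain ⟨hq, hs'⟩ := newValueReq_eq_some hu
  obtain ⟨hx, hval⟩ := Prod.mk.inj hq
  rw [← hx] at hs' hval
  have key : ∀ {a b}, a < b → (b = 0 ∨ F t.unpair.1 b < F t.unpair.1 (b - 1)) →
      F t.unpair.1 b < F t.unpair.1 a := fun hab hb =>
    hb.elim (fun h => absurd h (by omega)) fun h => h.trans_le (hF _ (by omega))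
  refine Nat.pairEquiv.symm.injective (Prod.ext hx ?_)
  rcases lt_trichotomy t.unpair.2 u.unpair.2 with hlt | heq | hgt
  · exact absurd hval (by have := key hlt hs'; omega)
  · exact heq
  · exact absurd hval (by have := key hgt hs; omega)

lemma reqWeight_newValueReq {A : ℕ → ℕ} (hAF : ∀ x s, A x ≤ F x s) {t : ℕ}
    (ht : (Nat.unpaired (newValueReq F c) t).isSome) :
    reqWeight (Nat.unpaired (newValueReq F c)) t =
      2⁻¹ ^ c * (2⁻¹ ^ A t.unpair.1 * 2⁻¹ ^ (F t.unpair.1 t.unpair.2 - A t.unpair.1)) := by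
  obtain ⟨q, hq⟩ := Option.isSome_iff_exists.1 ht
  obtain ⟨rfl, -⟩ := newValueReq_eq_some hq
  have hsplit : F t.unpair.1 t.unpair.2 + c =
      c + (A t.unpair.1 + (F t.unpair.1 t.unpair.2 - A t.unpair.1)) := by
    have := hAF t.unpair.1 t.unpair.2; omega
  rw [reqWeight_of_eq_some hq, hsplit, pow_add, pow_add]

lemma injOn_newValueReq {A : ℕ → ℕ} (hF : ∀ x, Antitone (F x)) (hAF : ∀ x s, A x ≤ F x s) :
    Set.InjOn (fun t => (t.unpair.1, F t.unpair.1 t.unpair.2 - A t.unpair.1))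
      {t | (Nat.unpaired (newValueReq F c) t).isSome} := by
  intro t ht u hu htu
  obtain ⟨q, hq⟩ := Option.isSome_iff_exists.1 ht
  obtain ⟨q', hq'⟩ := Option.isSome_iff_exists.1 hu
  obtain ⟨hx, hv⟩ := Prod.mk.inj htu
  obtain ⟨rfl, -⟩ := newValueReq_eq_some hq
  obtain ⟨rfl, -⟩ := newValueReq_eq_some hq'
  rw [hx] at hv
  have := hAF u.unpair.1 t.unpair.2
  have := hAF u.unpair.1 u.unpair.2
  refine eq_of_newValueReq_eq hF hq (hq'.trans ?_)
  rw [hx]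
  congr 2
  omega

theorem partialWeight_newValueReq_le_one {A : ℕ → ℕ} (hF : ∀ x, Antitone (F x))
    (hAF : ∀ x s, A x ≤ F x s) (hA : Summable fun x => (2 : ℝ)⁻¹ ^ A x)
    (hc : 2 * ∑' x, (2 : ℝ)⁻¹ ^ A x ≤ 2 ^ c) (T : ℕ) :
    partialWeight (Nat.unpaired (newValueReq F c)) T ≤ 1 := by
  set r := Nat.unpaired (newValueReq F c)
  have hgeom : Summable fun j : ℕ => (2 : ℝ)⁻¹ ^ j :=
    summable_geometric_of_lt_one (by norm_num) (by norm_num)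
  have hprod : Summable fun p : ℕ × ℕ => (2 : ℝ)⁻¹ ^ A p.1 * 2⁻¹ ^ p.2 :=
    hA.mul_of_nonneg hgeom (fun _ => by positivity) (fun _ => by positivity)
  -- a request `(x, F x s + c)` is charged to the pair `(x, F x s - A x)`
  set g : ℕ × ℕ → ℝ := fun p => 2⁻¹ ^ c * (2⁻¹ ^ A p.1 * 2⁻¹ ^ p.2)
  set φ : ℕ → ℕ × ℕ := fun t => (t.unpair.1, F t.unpair.1 t.unpair.2 - A t.unpair.1)
  set D := (Finset.range T).filter fun t => (r t).isSome
  calc partialWeight r T = ∑ t ∈ D, reqWeight r t := by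
        refine (Finset.sum_filter_of_ne fun t _ h => ?_).symm
        contrapose! h
        simp [reqWeight, Option.not_isSome_iff_eq_none.1 h]
    _ = ∑ t ∈ D, g (φ t) :=
        Finset.sum_congr rfl fun t ht => reqWeight_newValueReq hAF (Finset.mem_filter.1 ht).2
    _ = ∑ p ∈ D.image φ, g p :=
        (Finset.sum_image ((injOn_newValueReq hF hAF).mono fun t ht =>
          (Finset.mem_filter.1 ht).2)).symm
    _ ≤ ∑' p, g p := (hprod.mul_left _).sum_le_tsum _ fun _ _ => by positivity
    _ = 2⁻¹ ^ c * ((∑' x, (2 : ℝ)⁻¹ ^ A x) * ∑' j : ℕ, (2 : ℝ)⁻¹ ^ j) := by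
        rw [tsum_mul_left, hA.tsum_mul_tsum hgeom hprod]
    _ ≤ 1 := by
        rw [tsum_geometric_inv_two, inv_pow, inv_mul_le_iff₀ (by positivity)]
        linarith

lemma computable_newValueReq (hF : Computable₂ F) (c : ℕ) :
    Computable (Nat.unpaired (newValueReq F c)) := by
  have hx : Computable fun t : ℕ => t.unpair.1 := (Primrec.fst.comp Primrec.unpair).to_comp
  have hs : Computable fun t : ℕ => t.unpair.2 := (Primrec.snd.comp Primrec.unpair).to_comp
  have hFs : Computable fun t : ℕ => F t.unpair.1 t.unpair.2 := hF.comp hx hs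
  have hFp : Computable fun t : ℕ => F t.unpair.1 (t.unpair.2 - 1) :=
    hF.comp hx (Primrec.nat_sub.to_comp.comp hs (Computable.const 1))
  have hcond : Computable fun t : ℕ =>
      (decide (t.unpair.2 = 0) ||
        decide (F t.unpair.1 t.unpair.2 < F t.unpair.1 (t.unpair.2 - 1))) :=
    Primrec.or.to_comp.comp (Primrec.eq.decide.to_comp.comp hs (Computable.const 0))
      (Primrec.nat_lt.decide.to_comp.comp hFs hFp)
  refine (Computable.cond hcond (Computable.option_some.comp (Computable.pair hx
    (Primrec.nat_add.to_comp.comp hFs (Computable.const c)))) (Computable.const none)).of_eq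
    fun t => ?_
  simp only [Nat.unpaired, newValueReq, ← Bool.decide_or]
  exact Bool.cond_decide _ _ _

end NewValues

end KC

/-- Minimality of prefix-free complexity: if `A` is upper semicomputable and
`Σ 2^(−A x)` converges, then `K ≤ A + O(1)`. -/
theorem K_minimal (U' : ℕ →. ℕ) (hU' : PrefixOptimal U') (A : ℕ → ℕ)
    (h1 : UpperSemicomputable A)
    (h2 : Summable (fun x : ℕ => ((2 : ℝ))⁻¹ ^ A x)) :
    ∃ c, ∀ x, MachineCplx U' x ≤ A x + c := by
  obtain ⟨F, hF, hanti, hA⟩ := h1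
  have hAF : ∀ x s, A x ≤ F x s := fun x s => hA x ▸ ciInf_le (OrderBot.bddBelow _) s
  obtain ⟨c, hc⟩ := pow_unbounded_of_one_lt (2 * ∑' x, (2 : ℝ)⁻¹ ^ A x) one_lt_two
  obtain ⟨M, hMrec, hMfree, hMcode⟩ := exists_prefixFree_machine_of_requests
    (computable_newValueReq hF c) (partialWeight_newValueReq_le_one hanti hAF h2 hc.le)
  obtain ⟨d, hd⟩ := hU'.2.2 M hMrec hMfree
  refine ⟨c + 1 + d, fun x => ?_⟩
  obtain ⟨s, hs⟩ := exists_newValueReq_eq F c x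
  obtain ⟨y, hy, hxy⟩ := hMcode (Nat.pair x s) x (A x + c) (by simpa [Nat.unpaired, hA x] using hs)
  have := hd x y hxy
  omega
end
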